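/- Let α ∈ ℝ and let φ : ℝ² → ℝ, φ = φ(t,s), be twice continuously differentiable with φ_s(t,s) > 0 for all (t,s), satisfying the one-dimensional SMHD equation in Lagrangian coordinates with parabolic bottom concave down (b′(φ) = −φ): φ_tt − α² φ_ss + ∂_s(1/φ_s²) + φ = 0. Then the additional conservation law holds identically: ∂_t( φ cos t − φ_t sin t ) + ∂_s( (α² φ_s − 1/φ_s²) sin t ) = 0 for all (t,s). -/

import Mathlib

/-!
Differentiating, `∂_t(φ cos t − φ_t sin t) = −(φ + φ_tt) sin t` and
`∂_s((α² φ_s − 1/φ_s²) sin t) = (α² φ_ss − ∂_s(1/φ_s²)) sin t`, so the sum is `−sin t` times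
the left-hand side of the SMHD equation.
-/

/-- Partial derivative with respect to the first (time) variable. -/
noncomputable def pt (f : ℝ → ℝ → ℝ) (t s : ℝ) : ℝ := deriv (fun t' => f t' s) t

/-- Partial derivative with respect to the second (space) variable. -/
noncomputable def ps (f : ℝ → ℝ → ℝ) (t s : ℝ) : ℝ := deriv (fun s' => f t s') s

open Real

section Slices

variable {𝕜 E F G : Type*} [NontriviallyNormedField 𝕜] [NormedAddCommGroup E] [NormedSpace 𝕜 E]
  [NormedAddCommGroup F] [NormedSpace 𝕜 F] [NormedAddCommGroup G] [NormedSpace 𝕜 G]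
  {n : WithTop ℕ∞} {φ : E → F → G}

lemma ContDiff.uncurry_slice_fst (hφ : ContDiff 𝕜 n (fun p : E × F => φ p.1 p.2)) (y : F) :
    ContDiff 𝕜 n (fun x => φ x y) :=
  hφ.comp (contDiff_id.prodMk contDiff_const)

lemma ContDiff.uncurry_slice_snd (hφ : ContDiff 𝕜 n (fun p : E × F => φ p.1 p.2)) (x : E) :
    ContDiff 𝕜 n (fun y => φ x y) :=
  hφ.comp (contDiff_const.prodMk contDiff_id)

end Slices

lemma deriv_mul_cos_sub_deriv_mul_sin {f : ℝ → ℝ} {t : ℝ} (hf : DifferentiableAt ℝ f t)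
    (hf' : DifferentiableAt ℝ (deriv f) t) :
    deriv (fun t => f t * cos t - deriv f t * sin t) t = -(f t + deriv (deriv f) t) * sin t := by
  have h : HasDerivAt (fun t => f t * cos t - deriv f t * sin t)
      (deriv f t * cos t + f t * -sin t - (deriv (deriv f) t * sin t + deriv f t * cos t)) t :=
    (hf.hasDerivAt.mul (hasDerivAt_cos t)).sub (hf'.hasDerivAt.mul (hasDerivAt_sin t))
  rw [h.deriv]
  ring

lemma deriv_sub_one_div_sq_mul_const {g : ℝ → ℝ} {s : ℝ} (hg : DifferentiableAt ℝ g s)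
    (hgs : g s ≠ 0) (a c : ℝ) :
    deriv (fun s => (a * g s - 1 / g s ^ 2) * c) s
      = (a * deriv g s - deriv (fun s => 1 / g s ^ 2) s) * c := by
  have hinv : DifferentiableAt ℝ (fun s => 1 / g s ^ 2) s :=
    (differentiableAt_const 1).div (hg.pow 2) (pow_ne_zero 2 hgs)
  rw [deriv_mul_const_field, deriv_fun_sub (hg.const_mul a) hinv, deriv_const_mul_field]

theorem smhd_parabolic_down_cl2
    (α : ℝ) (φ : ℝ → ℝ → ℝ)
    (hφ : ContDiff ℝ 2 (fun p : ℝ × ℝ => φ p.1 p.2))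
    (hpos : ∀ t s, 0 < ps φ t s)
    (hpde : ∀ t s,
      pt (pt φ) t s - α ^ 2 * ps (ps φ) t s
        + ps (fun t s => 1 / (ps φ t s) ^ 2) t s + φ t s = 0) :
    ∀ t s,
      pt (fun t s => φ t s * Real.cos t - pt φ t s * Real.sin t) t s
        + ps (fun t s =>
            (α ^ 2 * ps φ t s - 1 / (ps φ t s) ^ 2) * Real.sin t) t s = 0 := by
  intro t s
  have hslice_t := hφ.uncurry_slice_fst s
  have hslice_s := hφ.uncurry_slice_snd t
  have htime : pt (fun t s => φ t s * cos t - pt φ t s * sin t) t s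
      = -(φ t s + pt (pt φ) t s) * sin t :=
    deriv_mul_cos_sub_deriv_mul_sin (hslice_t.differentiable two_ne_zero t)
      (hslice_t.differentiable_deriv_two t)
  have hspace : ps (fun t s => (α ^ 2 * ps φ t s - 1 / (ps φ t s) ^ 2) * sin t) t s
      = (α ^ 2 * ps (ps φ) t s - ps (fun t s => 1 / (ps φ t s) ^ 2) t s) * sin t :=
    deriv_sub_one_div_sq_mul_const (hslice_s.differentiable_deriv_two s) (hpos t s).ne' _ _
  rw [htime, hspace]
  linear_combination (-sin t) * hpde t s
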